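/- Let n, m be positive integers, let d > 1 be an integer dividing both n and m, let α ∈ ℂ be a primitive d-th root of unity, and let λ, β ∈ ℂ^×. Let A ∈ GL_d(ℂ) be the diagonal matrix with diagonal entries β, β α⁻¹, …, β α^{-(d-1)}, and let B ∈ GL_d(ℂ) be the matrix whose (i+1, i) entries equal 1 for 1 ≤ i ≤ d−1, whose (1, d) entry equals λ, and whose other entries are 0. Then there exists a unique quandle representation ρ : Q_{n,m} → GL_d(ℂ) with ρ(x₁) = A and ρ(y₁) = B; it satisfies ρ(x_i) = α^{i−1}·A for all i ∈ ℤ/nℤ and ρ(y_j) = α^{1−j}·B for all j ∈ ℤ/mℤ, and it is irreducible. -/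

import Mathlib

open Quandles

/-- The underlying set of the quandle `Q_{n,m}`. -/
inductive Qnm (n m : ℕ) : Type
  | x : ZMod n → Qnm n m
  | y : ZMod m → Qnm n m

namespace Qnm

variable {n m : ℕ}

/-- The quandle structure on `Q_{n,m}`:
`x_i ◃ y_j = y_{j+1}`, `y_i ◃ x_j = x_{j+1}`, `x_i ◃ x_j = x_j`, `y_i ◃ y_j = y_j`. -/
instance : Quandle (Qnm n m) where
  act a b :=
    match a, b with
    | .x _, .y j => .y (j + 1)
    | .y _, .x j => .x (j + 1)
    | .x _, .x j => .x j
    | .y _, .y j => .y j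
  self_distrib := by
    intro a b c
    rcases a with i | i <;> rcases b with j | j <;> rcases c with k | k <;> rfl
  invAct a b :=
    match a, b with
    | .x _, .y j => .y (j - 1)
    | .y _, .x j => .x (j - 1)
    | .x _, .x j => .x j
    | .y _, .y j => .y j
  left_inv := by
    intro a b
    rcases a with i | i <;> rcases b with j | j <;> simp
  right_inv := by
    intro a b
    rcases a with i | i <;> rcases b with j | j <;> simp
  fix := by
    intro a
    rcases a with i | i <;> rfl

end Qnm

/-!
Let `z` be the scalar matrix `α`. The quandle axioms force `ρ(x_{1+k}) = B^k A B^{-k}` and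
`ρ(y_{1+k}) = A^k B A^{-k}`, and the commutation rule `B A B⁻¹ = z A` (equivalently
`A B A⁻¹ = z⁻¹ B`) turns these into `α^k A` and `α^{-k} B`; conversely, since `z` is central with
`z^n = z^m = 1`, these formulas do define a representation.

Irreducibility: `A` is diagonal with distinct eigenvalues `c_k`, so applying `∏_{j ≠ i} (A - c_j)`
to a nonzero vector of an invariant subspace with nonzero `i`-th coordinate yields the basis vector
`e_i` up to a scalar; `B` is a cyclic shift `e_j ↦ g_j e_{j+1}` with nonzero weights and carries
`e_i` to every other basis vector.
-/

lemma pow_eq_pow_of_natCast_eq {M : Type*} [Monoid M] {x : M} {n a b : ℕ} (hx : x ^ n = 1)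
    (h : (a : ZMod n) = b) : x ^ a = x ^ b := by
  rw [pow_eq_pow_mod a hx, pow_eq_pow_mod b hx, (ZMod.natCast_eq_natCast_iff' a b n).mp h]

lemma pow_val_neg {G : Type*} [Group G] {x : G} {n : ℕ} [NeZero n] (hx : x ^ n = 1)
    (a : ZMod n) : x ^ (-a).val = x⁻¹ ^ a.val := by
  rw [inv_pow, eq_inv_iff_mul_eq_one, ← pow_add, pow_eq_pow_of_natCast_eq hx (b := 0), pow_zero]
  simp

lemma Fin.pow_val_add_one {M : Type*} [Monoid M] {x : M} {d : ℕ} [NeZero d] (hx : x ^ d = 1)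
    (j : Fin d) : x ^ (j + 1).val = x ^ j.val * x := by
  rw [Fin.val_add, ← pow_eq_pow_mod _ hx, pow_add, Fin.val_one', ← pow_eq_pow_mod _ hx, pow_one]

open Fin.NatCast in
lemma Fin.induction_add_one {d : ℕ} [NeZero d] {P : Fin d → Prop} {i : Fin d} (hi : P i)
    (h : ∀ j, P j → P (j + 1)) (j : Fin d) : P j := by
  have hk : ∀ k : ℕ, P (i + k) := by
    intro k
    induction k with
    | zero => simpa using hi
    | succ k ih => simpa [add_assoc] using h _ ih
  simpa using hk (j - i).val

section Conjugation

variable {G : Type*} [Group G] {z u v : G}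

lemma conj_central_mul (hz : z ∈ Subgroup.center G) (g w : G) :
    z * g * w * (z * g)⁻¹ = g * w * g⁻¹ :=
  calc z * g * w * (z * g)⁻¹ = z * (g * w * g⁻¹) * z⁻¹ := by group
    _ = g * w * g⁻¹ := Commute.mul_inv_cancel (Subgroup.mem_center_iff.mp hz _).symm

lemma conj_mul_central (hz : z ∈ Subgroup.center G) (g w : G) :
    g * (z * w) * g⁻¹ = z * (g * w * g⁻¹) :=
  calc g * (z * w) * g⁻¹ = g * z * g⁻¹ * (g * w * g⁻¹) := by group
    _ = z * (g * w * g⁻¹) := by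
      rw [Commute.mul_inv_cancel (b := z) (Subgroup.mem_center_iff.mp hz g)]

lemma conj_eq_inv_mul_of_conj_eq (h : v * u * v⁻¹ = z * u) : u * v * u⁻¹ = z⁻¹ * v :=
  calc u * v * u⁻¹ = z⁻¹ * (z * u) * v * u⁻¹ := by group
    _ = z⁻¹ * v := by rw [← h]; group

lemma pow_conj_eq_pow_mul (hz : z ∈ Subgroup.center G) (h : v * u * v⁻¹ = z * u) (k : ℕ) :
    v ^ k * u * (v ^ k)⁻¹ = z ^ k * u := by
  induction k with
  | zero => simp
  | succ k ih =>
    calc v ^ (k + 1) * u * (v ^ (k + 1))⁻¹ = v * (v ^ k * u * (v ^ k)⁻¹) * v⁻¹ := by group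
      _ = z ^ (k + 1) * u := by
        rw [ih, conj_mul_central (Subgroup.pow_mem _ hz k), h, pow_succ, mul_assoc]

end Conjugation

def IsQuandleRep {Q G : Type*} [Shelf Q] [Group G] (ρ : Q → G) : Prop :=
  ∀ a b, ρ (a ◃ b) = ρ a * ρ b * (ρ a)⁻¹

namespace Qnm

variable {n m : ℕ} {G : Type*} [Group G]

@[simp] lemma x_act_x (i j : ZMod n) : (x i : Qnm n m) ◃ x j = x j := rfl
@[simp] lemma x_act_y (i : ZMod n) (j : ZMod m) : x i ◃ y j = y (j + 1) := rfl
@[simp] lemma y_act_x (i : ZMod m) (j : ZMod n) : y i ◃ x j = x (j + 1) := rfl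
@[simp] lemma y_act_y (i j : ZMod m) : (y i : Qnm n m) ◃ y j = y j := rfl

lemma rep_x_add_natCast {ρ : Qnm n m → G} (hρ : IsQuandleRep ρ) (i : ZMod n) (j : ZMod m)
    (k : ℕ) : ρ (x (i + k)) = ρ (y j) ^ k * ρ (x i) * (ρ (y j) ^ k)⁻¹ := by
  induction k with
  | zero => simp
  | succ k ih =>
    rw [Nat.cast_succ, ← add_assoc, ← y_act_x j, hρ, ih]
    group

lemma rep_y_add_natCast {ρ : Qnm n m → G} (hρ : IsQuandleRep ρ) (i : ZMod n) (j : ZMod m)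
    (k : ℕ) : ρ (y (j + k)) = ρ (x i) ^ k * ρ (y j) * (ρ (x i) ^ k)⁻¹ := by
  induction k with
  | zero => simp
  | succ k ih =>
    rw [Nat.cast_succ, ← add_assoc, ← x_act_y i, hρ, ih]
    group

def repOf (z u v : G) : Qnm n m → G
  | x i => z ^ (i - 1).val * u
  | y j => z ^ (1 - j).val * v

variable {z u v : G}

@[simp] lemma repOf_x (i : ZMod n) : repOf z u v (x i : Qnm n m) = z ^ (i - 1).val * u := rfl
@[simp] lemma repOf_y (j : ZMod m) : repOf z u v (y j : Qnm n m) = z ^ (1 - j).val * v := rfl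

lemma repOf_x_one : repOf z u v (x 1 : Qnm n m) = u := by simp
lemma repOf_y_one : repOf z u v (y 1 : Qnm n m) = v := by simp

variable [NeZero n] [NeZero m]

lemma isQuandleRep_repOf (hz : z ∈ Subgroup.center G) (hzn : z ^ n = 1) (hzm : z ^ m = 1)
    (hvu : v * u * v⁻¹ = z * u) : IsQuandleRep (repOf z u v : Qnm n m → G) := by
  have hzpow (k : ℕ) : z ^ k ∈ Subgroup.center G := Subgroup.pow_mem _ hz k
  rintro (i | i) (j | j) <;>
    simp only [x_act_x, x_act_y, y_act_x, y_act_y, repOf_x, repOf_y] <;>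
    rw [conj_central_mul (hzpow _), conj_mul_central (hzpow _)]
  · rw [mul_inv_cancel_right]
  · have hpow : z ^ (1 - j).val = z ^ ((1 - (j + 1)).val + 1) :=
      pow_eq_pow_of_natCast_eq hzm (by simp; ring)
    rw [conj_eq_inv_mul_of_conj_eq hvu, hpow, pow_succ]
    group
  · have hpow : z ^ ((j - 1).val + 1) = z ^ j.val := pow_eq_pow_of_natCast_eq hzn (by simp)
    rw [hvu, add_sub_cancel_right, ← mul_assoc, ← pow_succ, hpow]
  · rw [mul_inv_cancel_right]

lemma eq_repOf {ρ : Qnm n m → G} (hρ : IsQuandleRep ρ) (hz : z ∈ Subgroup.center G)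
    (hzm : z ^ m = 1) (hvu : v * u * v⁻¹ = z * u) (hx : ρ (x 1) = u) (hy : ρ (y 1) = v) :
    ρ = repOf z u v := by
  funext q
  rcases q with i | j
  · have := rep_x_add_natCast hρ 1 1 (i - 1).val
    rwa [ZMod.natCast_zmod_val, add_sub_cancel, hx, hy, pow_conj_eq_pow_mul hz hvu] at this
  · have := rep_y_add_natCast hρ 1 1 (j - 1).val
    rwa [ZMod.natCast_zmod_val, add_sub_cancel, hx, hy,
      pow_conj_eq_pow_mul (Subgroup.inv_mem _ hz) (conj_eq_inv_mul_of_conj_eq hvu),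
      ← pow_val_neg hzm, neg_sub] at this

theorem existsUnique_isQuandleRep (hz : z ∈ Subgroup.center G) (hzn : z ^ n = 1)
    (hzm : z ^ m = 1) (hvu : v * u * v⁻¹ = z * u) :
    ∃! ρ : Qnm n m → G, IsQuandleRep ρ ∧ ρ (x 1) = u ∧ ρ (y 1) = v :=
  ⟨repOf z u v, ⟨isQuandleRep_repOf hz hzn hzm hvu, repOf_x_one, repOf_y_one⟩,
    fun _ ⟨hρ, hx, hy⟩ => eq_repOf hρ hz hzm hvu hx hy⟩

end Qnm

lemma Submodule.eq_top_of_forall_single_mem {R M ι : Type*} [Semiring R] [AddCommMonoid M]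
    [Module R M] [Fintype ι] [DecidableEq ι] {W : Submodule R (ι → M)}
    (h : ∀ j a, Pi.single j a ∈ W) : W = ⊤ :=
  eq_top_iff.2 fun u _ => Finset.univ_sum_single u ▸ W.sum_mem fun j _ => h j (u j)

namespace Matrix

section Diagonal

variable {K ι : Type*} [Field K] [Fintype ι] [DecidableEq ι] {c : ι → K}
  {W : Submodule K (ι → K)}

lemma diagonal_prod_sub_mulVec_mem (hW : ∀ v ∈ W, diagonal c *ᵥ v ∈ W) (s : Finset ι) {v : ι → K}
    (hv : v ∈ W) : diagonal (fun k => ∏ j ∈ s, (c k - c j)) *ᵥ v ∈ W := by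
  induction s using Finset.induction_on with
  | empty => simpa using hv
  | insert a s ha ih =>
    have hstep := W.sub_mem (hW _ ih) (W.smul_mem (c a) ih)
    convert hstep using 1
    ext k
    simp only [Finset.prod_insert ha, mulVec_diagonal, mulVec_mulVec, diagonal_mul_diagonal,
      Pi.sub_apply, Pi.smul_apply, smul_eq_mul]
    ring

lemma exists_forall_single_mem_of_diagonal_invariant (hc : Function.Injective c)
    (hW : ∀ v ∈ W, diagonal c *ᵥ v ∈ W) (hW0 : W ≠ ⊥) : ∃ i, ∀ a, Pi.single i a ∈ W := by
  obtain ⟨v, hv, hv0⟩ := W.ne_bot_iff.mp hW0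
  obtain ⟨i, hvi⟩ := Function.ne_iff.mp hv0
  set p : ι → K := fun k => ∏ j ∈ Finset.univ.erase i, (c k - c j)
  have hpi : p i ≠ 0 := Finset.prod_ne_zero_iff.2 fun j hj =>
    sub_ne_zero.2 (hc.ne (Finset.ne_of_mem_erase hj).symm)
  have hp : diagonal p *ᵥ v = Pi.single i (p i * v i) := by
    ext k
    rcases eq_or_ne k i with rfl | hk
    · simp [mulVec_diagonal]
    · simp [mulVec_diagonal, hk, p,
        Finset.prod_eq_zero (Finset.mem_erase.2 ⟨hk, Finset.mem_univ k⟩)]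
  refine ⟨i, fun a => ?_⟩
  have hmem := W.smul_mem (a / (p i * v i)) (hp ▸ diagonal_prod_sub_mulVec_mem hW _ hv)
  rwa [← Pi.single_smul', smul_eq_mul, div_mul_cancel₀ _ (mul_ne_zero hpi hvi)] at hmem

end Diagonal

variable {R : Type*} {d : ℕ} [NeZero d]

def weightedShift [Zero R] (g : Fin d → R) : Matrix (Fin d) (Fin d) R :=
  of fun i j => if i = j + 1 then g j else 0

lemma weightedShift_mulVec_single [Semiring R] (g : Fin d → R) (j : Fin d) (a : R) :
    weightedShift g *ᵥ Pi.single j a = Pi.single (j + 1) (g j * a) := by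
  ext i
  simp [weightedShift, mulVec_single, Pi.single_apply]

lemma weightedShift_mul_diagonal [CommSemiring R] {g c : Fin d → R} {a : R}
    (h : ∀ j, a * c (j + 1) = c j) :
    weightedShift g * diagonal c = a • (diagonal c * weightedShift g) := by
  ext i j
  simp only [weightedShift, mul_diagonal, diagonal_mul, smul_apply, of_apply, smul_eq_mul]
  split_ifs with hij
  · rw [hij, ← h j]
    ring
  · simp

variable {K : Type*} [Field K] {g : Fin d → K}

lemma isUnit_weightedShift (hg : ∀ j, g j ≠ 0) : IsUnit (weightedShift g) := by
  have hrange : LinearMap.range (weightedShift g).mulVecLin = ⊤ :=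
    Submodule.eq_top_of_forall_single_mem fun j a => ⟨Pi.single (j - 1) ((g (j - 1))⁻¹ * a), by
      rw [mulVecLin_apply, weightedShift_mulVec_single, sub_add_cancel,
        mul_inv_cancel_left₀ (hg _)]⟩
  exact mulVec_surjective_iff_isUnit.1 (LinearMap.range_eq_top.1 hrange)

lemma eq_bot_or_eq_top_of_diagonal_weightedShift_invariant {c : Fin d → K}
    (hc : Function.Injective c) (hg : ∀ j, g j ≠ 0) {W : Submodule K (Fin d → K)}
    (hA : ∀ v ∈ W, diagonal c *ᵥ v ∈ W) (hB : ∀ v ∈ W, weightedShift g *ᵥ v ∈ W) :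
    W = ⊥ ∨ W = ⊤ := by
  refine or_iff_not_imp_left.2 fun hW0 => ?_
  obtain ⟨i, hi⟩ := exists_forall_single_mem_of_diagonal_invariant hc hA hW0
  refine Submodule.eq_top_of_forall_single_mem (Fin.induction_add_one hi fun j hj a => ?_)
  have hmem := hB _ (hj ((g j)⁻¹ * a))
  rwa [weightedShift_mulVec_single, mul_inv_cancel_left₀ (hg j)] at hmem

lemma of_eq_weightedShift {R : Type*} [Zero R] [One R] {d : ℕ} [NeZero d] (lam : R) :
    (of fun i j : Fin d => if (i : ℕ) = (j : ℕ) + 1 then 1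
      else if (i : ℕ) = 0 ∧ (j : ℕ) = d - 1 then lam else 0) =
      weightedShift fun j => if (j : ℕ) = d - 1 then lam else 1 := by
  obtain ⟨e, rfl⟩ := Nat.exists_eq_succ_of_ne_zero (NeZero.ne d)
  ext i j
  have := i.isLt
  simp only [weightedShift, of_apply, Fin.ext_iff, Fin.val_add_one, Fin.val_last]
  split_ifs <;> first | rfl | omega

lemma GeneralLinearGroup.coe_scalar_pow_mul {n R : Type*} [Fintype n] [DecidableEq n]
    [CommRing R] (u : Rˣ) (k : ℕ) (U : GL n R) :
    ((scalar n u ^ k * U : GL n R) : Matrix n n R) = (u : R) ^ k • (U : Matrix n n R) := by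
  rw [← map_pow, Units.val_mul, coe_scalar, Units.val_pow_eq_pow_val, scalar_apply,
    smul_eq_diagonal_mul]

lemma GeneralLinearGroup.mul_mul_inv_eq_scalar_mul {n R : Type*} [Fintype n] [DecidableEq n]
    [CommRing R] {u : Rˣ} {U V : GL n R}
    (h : (V : Matrix n n R) * U = (u : R) • ((U : Matrix n n R) * V)) :
    V * U * V⁻¹ = scalar n u * U := by
  rw [mul_inv_eq_iff_eq_mul, Units.ext_iff, Units.val_mul, h, ← pow_one (scalar n u), Units.val_mul,
    coe_scalar_pow_mul, pow_one, smul_mul_assoc]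

end Matrix

section PrimitiveRoot

variable {K : Type*} [Field K] {α : K} {d : ℕ} {β : K}

lemma IsPrimitiveRoot.injective_mul_inv_pow (hα : IsPrimitiveRoot α d) (hβ : β ≠ 0) :
    Function.Injective fun i : Fin d => β * α⁻¹ ^ (i : ℕ) := fun i j h =>
  Fin.ext (hα.inv.pow_inj i.isLt j.isLt (mul_left_cancel₀ hβ h))

lemma IsPrimitiveRoot.mul_mul_inv_pow_val_add_one [NeZero d] (hα : IsPrimitiveRoot α d)
    (j : Fin d) : α * (β * α⁻¹ ^ (j + 1 : Fin d).val) = β * α⁻¹ ^ j.val := by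
  rw [Fin.pow_val_add_one hα.inv.pow_eq_one j]
  field_simp [hα.ne_zero (NeZero.ne d)]

end PrimitiveRoot

theorem qnm_rep_of_matrices_general (n m d : ℕ) (hn : 0 < n) (hm : 0 < m)
    (hdn : d ∣ n) (hdm : d ∣ m)
    (α : ℂ) (hα : IsPrimitiveRoot α d)
    (lam beta : ℂ) (hlam : lam ≠ 0) (hbeta : beta ≠ 0)
    (A B : Matrix (Fin d) (Fin d) ℂ)
    (hA : A = Matrix.diagonal fun i : Fin d => beta * α⁻¹ ^ (i : ℕ))
    (hB : B = Matrix.of fun i j : Fin d =>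
      if (i : ℕ) = (j : ℕ) + 1 then 1
      else if (i : ℕ) = 0 ∧ (j : ℕ) = d - 1 then lam else 0) :
    (∃! ρ : Qnm n m → Matrix.GeneralLinearGroup (Fin d) ℂ,
        (∀ a b : Qnm n m, ρ (a ◃ b) = ρ a * ρ b * (ρ a)⁻¹) ∧
        (ρ (Qnm.x 1) : Matrix (Fin d) (Fin d) ℂ) = A ∧
        (ρ (Qnm.y 1) : Matrix (Fin d) (Fin d) ℂ) = B) ∧
      ∀ ρ : Qnm n m → Matrix.GeneralLinearGroup (Fin d) ℂ,
        (∀ a b : Qnm n m, ρ (a ◃ b) = ρ a * ρ b * (ρ a)⁻¹) →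
        (ρ (Qnm.x 1) : Matrix (Fin d) (Fin d) ℂ) = A →
        (ρ (Qnm.y 1) : Matrix (Fin d) (Fin d) ℂ) = B →
        (∀ i : ZMod n, (ρ (Qnm.x i) : Matrix (Fin d) (Fin d) ℂ) = α ^ (i - 1).val • A) ∧
        (∀ j : ZMod m, (ρ (Qnm.y j) : Matrix (Fin d) (Fin d) ℂ) = α ^ (1 - j).val • B) ∧
        ∀ W : Submodule ℂ (Fin d → ℂ),
          (∀ q : Qnm n m, ∀ v ∈ W, (ρ q : Matrix (Fin d) (Fin d) ℂ).mulVec v ∈ W) →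
          W = ⊥ ∨ W = ⊤ := by
  have hd0 : d ≠ 0 := (Nat.pos_of_dvd_of_pos hdn hn).ne'
  have : NeZero n := ⟨hn.ne'⟩
  have : NeZero m := ⟨hm.ne'⟩
  have : NeZero d := ⟨hd0⟩
  have hg (j : Fin d) : (if (j : ℕ) = d - 1 then lam else 1) ≠ 0 := by split_ifs <;> simp [hlam]
  rw [Matrix.of_eq_weightedShift] at hB
  obtain ⟨U, rfl⟩ : IsUnit A := hA ▸ Matrix.isUnit_diagonal.2 (Pi.isUnit_iff.2 fun i =>
    (mul_ne_zero hbeta (pow_ne_zero _ (inv_ne_zero (hα.ne_zero hd0)))).isUnit)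
  obtain ⟨V, rfl⟩ : IsUnit B := hB ▸ Matrix.isUnit_weightedShift hg
  set z := Matrix.GeneralLinearGroup.scalar (Fin d) (hα.isUnit hd0).unit
  have hz : z ∈ Subgroup.center _ := by
    rw [Matrix.GeneralLinearGroup.center_eq_range_scalar]
    exact ⟨_, rfl⟩
  have hzpow {k : ℕ} (hk : d ∣ k) : z ^ k = 1 := by
    rw [← map_pow, ((hα.isUnit_unit hd0).pow_eq_one_iff_dvd k).2 hk, map_one]
  have hvu : V * U * V⁻¹ = z * U := Matrix.GeneralLinearGroup.mul_mul_inv_eq_scalar_mul <| by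
    rw [hA, hB, Matrix.weightedShift_mul_diagonal hα.mul_mul_inv_pow_val_add_one]
    rfl
  simp only [Units.val_inj]
  refine ⟨Qnm.existsUnique_isQuandleRep hz (hzpow hdn) (hzpow hdm) hvu, fun ρ hρ hx hy => ?_⟩
  obtain rfl := Qnm.eq_repOf hρ hz (hzpow hdm) hvu hx hy
  refine ⟨fun i => Matrix.GeneralLinearGroup.coe_scalar_pow_mul .., fun j =>
    Matrix.GeneralLinearGroup.coe_scalar_pow_mul .., fun W hW => ?_⟩
  have hAW := hW (Qnm.x 1)
  have hBW := hW (Qnm.y 1)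
  rw [hx, hA] at hAW
  rw [hy, hB] at hBW
  exact Matrix.eq_bot_or_eq_top_of_diagonal_weightedShift_invariant
    (hα.injective_mul_inv_pow hbeta) hg hAW hBW

/-- There is a unique quandle representation `ρ : Q_{n,m} → GL_d(ℂ)` with
`ρ(x₁) = A` and `ρ(y₁) = B`; it satisfies `ρ(x_i) = α^{i-1}·A`, `ρ(y_j) = α^{1-j}·B`,
and it is irreducible. -/
theorem qnm_rep_of_matrices (n m d : ℕ) (hn : 0 < n) (hm : 0 < m)
    (hd : 1 < d) (hdn : d ∣ n) (hdm : d ∣ m)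
    (α : ℂ) (hα : IsPrimitiveRoot α d)
    (lam beta : ℂ) (hlam : lam ≠ 0) (hbeta : beta ≠ 0)
    (A B : Matrix (Fin d) (Fin d) ℂ)
    (hA : A = Matrix.diagonal fun i : Fin d => beta * α⁻¹ ^ (i : ℕ))
    (hB : B = Matrix.of fun i j : Fin d =>
      if (i : ℕ) = (j : ℕ) + 1 then 1
      else if (i : ℕ) = 0 ∧ (j : ℕ) = d - 1 then lam else 0) :
    (∃! ρ : Qnm n m → Matrix.GeneralLinearGroup (Fin d) ℂ,
        (∀ a b : Qnm n m, ρ (a ◃ b) = ρ a * ρ b * (ρ a)⁻¹) ∧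
        (ρ (Qnm.x 1) : Matrix (Fin d) (Fin d) ℂ) = A ∧
        (ρ (Qnm.y 1) : Matrix (Fin d) (Fin d) ℂ) = B) ∧
      ∀ ρ : Qnm n m → Matrix.GeneralLinearGroup (Fin d) ℂ,
        (∀ a b : Qnm n m, ρ (a ◃ b) = ρ a * ρ b * (ρ a)⁻¹) →
        (ρ (Qnm.x 1) : Matrix (Fin d) (Fin d) ℂ) = A →
        (ρ (Qnm.y 1) : Matrix (Fin d) (Fin d) ℂ) = B →
        (∀ i : ZMod n, (ρ (Qnm.x i) : Matrix (Fin d) (Fin d) ℂ) = α ^ (i - 1).val • A) ∧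
        (∀ j : ZMod m, (ρ (Qnm.y j) : Matrix (Fin d) (Fin d) ℂ) = α ^ (1 - j).val • B) ∧
        ∀ W : Submodule ℂ (Fin d → ℂ),
          (∀ q : Qnm n m, ∀ v ∈ W, (ρ q : Matrix (Fin d) (Fin d) ℂ).mulVec v ∈ W) →
          W = ⊥ ∨ W = ⊤ :=
  qnm_rep_of_matrices_general n m d hn hm hdn hdm α hα lam beta hlam hbeta A B hA hB
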